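/- arXiv:1902.09633 — 5 statements merged into one kernel-verified Lean document; each statement's English description precedes it below -/
import Mathlib

section
/- For every γ with 0 < γ ≤ 1, the kernel C_γ on the nonnegative half-line defined by C_γ(s,t) = (s+t)^γ − (max(s,t))^γ is nonnegative definite; that is, for every n ∈ ℕ, all t_1,…,t_n ≥ 0, and all complex numbers z_1,…,z_n, one has Σ_{j,k=1}^n z_j · C_γ(t_j,t_k) · conj(z_k) ≥ 0 (this sum is real and nonnegative). -/
/-!
For `0 < γ < 1` and `a ≥ 0`, the substitution `θ ↦ θ / a` gives
`a ^ γ = c⁻¹ ∫₀^∞ θ^(-1-γ) (1 - e^{-aθ}) dθ` with `c > 0`, hence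
`C_γ(s,t) = c⁻¹ ∫₀^∞ θ^(-1-γ) (e^{-θ max(s,t)} - e^{-θ(s+t)}) dθ`.
As `max + min = s + t`, the integrand is `θ^(-1-γ) e^{-θs} (e^{θ min(s,t)} - 1) e^{-θt}`, and
`f(min(s,t)) - f(0) = μ_f((0,s] ∩ (0,t])` is a Gram kernel for the Stieltjes measure `μ_f` of the
increasing function `f(x) = e^{θx}`. So `C_γ` is an integral of positive semidefinite kernels.
For `γ = 1` the kernel is `min(s,t)`, the Gram kernel of Lebesgue measure.
-/

open scoped ComplexOrder

/-- The kernel `C_γ(s,t) = (s+t)^γ − (max(s,t))^γ`. -/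
noncomputable def Cker (γ s t : ℝ) : ℝ := (s + t) ^ γ - max s t ^ γ

open MeasureTheory Set Real Matrix

variable {ι : Type*} [Fintype ι]

theorem Matrix.PosSemidef.map_ofReal {𝕜 : Type*} [RCLike 𝕜] {A : Matrix ι ι ℝ}
    (hA : A.PosSemidef) : (A.map ((↑) : ℝ → 𝕜)).PosSemidef := by
  refine .of_dotProduct_mulVec_nonneg (hA.isHermitian.map _ fun _ => by simp)
    fun x => RCLike.nonneg_iff.2 ⟨?_, ?_⟩
  · have hre := hA.dotProduct_mulVec_nonneg (fun i => RCLike.re (x i))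
    have him := hA.dotProduct_mulVec_nonneg (fun i => RCLike.im (x i))
    simp only [dotProduct, mulVec, star_trivial, Finset.mul_sum] at hre him
    simpa [dotProduct, mulVec, Finset.mul_sum, map_sum, Finset.sum_add_distrib]
      using add_nonneg hre him
  · have hswap : ∑ i, ∑ j, RCLike.re (x i) * (A i j * RCLike.im (x j)) =
        ∑ i, ∑ j, RCLike.im (x i) * (A i j * RCLike.re (x j)) := by
      rw [Finset.sum_comm]
      exact Finset.sum_congr rfl fun i _ => Finset.sum_congr rfl fun j _ => by
        rw [← hA.isHermitian.apply i j, star_trivial]; ring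
    simp [dotProduct, mulVec, Finset.mul_sum, map_sum, Finset.sum_add_distrib, hswap]

theorem Matrix.posSemidef_integral {X : Type*} [MeasurableSpace X] {μ : Measure X}
    {M : X → Matrix ι ι ℝ} (hM : ∀ᵐ x ∂μ, (M x).PosSemidef)
    (hint : ∀ i j, Integrable (fun x => M x i j) μ) :
    (of fun i j => ∫ x, M x i j ∂μ).PosSemidef := by
  refine .of_dotProduct_mulVec_nonneg ?_ fun v => ?_
  · ext i j
    simpa using integral_congr_ae (hM.mono fun x hx => hx.isHermitian.apply i j)
  · have hform : star v ⬝ᵥ ((of fun i j => ∫ x, M x i j ∂μ) *ᵥ v) =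
        ∫ x, star v ⬝ᵥ (M x *ᵥ v) ∂μ := by
      simp only [dotProduct, mulVec, of_apply, star_trivial, Finset.mul_sum]
      rw [integral_finsetSum _ fun i _ => integrable_finsetSum _ fun j _ =>
        ((hint i j).mul_const _).const_mul _]
      refine Finset.sum_congr rfl fun i _ => ?_
      rw [integral_finsetSum _ fun j _ => ((hint i j).mul_const _).const_mul _]
      simp only [integral_const_mul, integral_mul_const]
    rw [hform]
    exact integral_nonneg_of_ae (hM.mono fun x hx => hx.dotProduct_mulVec_nonneg v)

theorem StieltjesFunction.posSemidef_min_sub (f : StieltjesFunction ℝ) {a : ℝ} {t : ι → ℝ}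
    (ht : ∀ i, a ≤ t i) : (of fun i j => f (min (t i) (t j)) - f a).PosSemidef := by
  convert posSemidef_matrix_measure_inter (μ := f.measure) (s := fun i => Ioc a (t i))
    (fun _ => measurableSet_Ioc) (fun _ => by simp [f.measure_Ioc]) using 2
  ext i j
  rw [Ioc_inter_Ioc, max_self, measureReal_def, f.measure_Ioc,
    ENNReal.toReal_ofReal (sub_nonneg.2 (f.mono (le_min (ht i) (ht j))))]

theorem integrableOn_rpow_mul_one_sub_exp {γ a : ℝ} (hγ0 : 0 < γ) (hγ1 : γ < 1) (ha : 0 ≤ a) :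
    IntegrableOn (fun θ => θ ^ (-1 - γ) * (1 - exp (-(a * θ)))) (Ioi 0) := by
  have hmeas : AEStronglyMeasurable (fun θ => θ ^ (-1 - γ) * (1 - exp (-(a * θ)))) := by
    fun_prop
  have hbound : ∀ θ ∈ Ioi (0 : ℝ), ‖θ ^ (-1 - γ) * (1 - exp (-(a * θ)))‖ ≤
      θ ^ (-1 - γ) * min 1 (a * θ) := by
    intro θ hθ
    have hexp : exp (-(a * θ)) ≤ 1 := exp_le_one_iff.2 (neg_nonpos.2 (mul_nonneg ha hθ.le))
    rw [norm_of_nonneg (mul_nonneg (rpow_nonneg hθ.le _) (sub_nonneg.2 hexp))]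
    exact mul_le_mul_of_nonneg_left
      (le_min (by linarith [exp_pos (-(a * θ))]) (by linarith [add_one_le_exp (-(a * θ))]))
      (rpow_nonneg hθ.le _)
  rw [← Ioc_union_Ioi_eq_Ioi zero_le_one]
  refine IntegrableOn.union ?_ ?_
  · have hdom : IntegrableOn (fun θ : ℝ => a * θ ^ (-γ)) (Ioc 0 1) :=
      (intervalIntegral.intervalIntegrable_rpow' (by linarith)).1.const_mul a
    refine hdom.mono' hmeas.restrict ((ae_restrict_mem measurableSet_Ioc).mono fun θ hθ => ?_)
    calc _ ≤ θ ^ (-1 - γ) * (a * θ) := (hbound θ hθ.1).trans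
            (mul_le_mul_of_nonneg_left (min_le_right _ _) (rpow_nonneg hθ.1.le _))
      _ = a * θ ^ (-γ) := by
        rw [mul_left_comm, ← rpow_add_one hθ.1.ne']; ring_nf
  · refine (integrableOn_Ioi_rpow_of_lt (a := -1 - γ) (by linarith) zero_lt_one).mono'
      hmeas.restrict ((ae_restrict_mem measurableSet_Ioi).mono fun θ hθ => ?_)
    have hθ0 : (0 : ℝ) < θ := zero_lt_one.trans hθ
    exact (hbound θ hθ0).trans
      (mul_le_of_le_one_right (rpow_nonneg hθ0.le _) (min_le_left _ _))

theorem integral_rpow_mul_one_sub_exp {γ a : ℝ} (hγ0 : 0 < γ) (ha : 0 ≤ a) :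
    ∫ θ in Ioi 0, θ ^ (-1 - γ) * (1 - exp (-(a * θ))) =
      a ^ γ * ∫ θ in Ioi 0, θ ^ (-1 - γ) * (1 - exp (-θ)) := by
  rcases ha.eq_or_lt with rfl | ha
  · simp [zero_rpow hγ0.ne']
  calc ∫ θ in Ioi 0, θ ^ (-1 - γ) * (1 - exp (-(a * θ)))
      = ∫ θ in Ioi 0, a ^ (1 + γ) * ((a * θ) ^ (-1 - γ) * (1 - exp (-(a * θ)))) := by
        refine setIntegral_congr_fun measurableSet_Ioi fun θ hθ => ?_
        rw [mul_rpow ha.le (le_of_lt hθ), ← mul_assoc, ← mul_assoc, ← rpow_add ha]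
        norm_num
    _ = a ^ (1 + γ) * (a⁻¹ * ∫ θ in Ioi 0, θ ^ (-1 - γ) * (1 - exp (-θ))) := by
        rw [integral_const_mul,
          integral_comp_mul_left_Ioi (fun u => u ^ (-1 - γ) * (1 - exp (-u))) 0 ha,
          mul_zero, smul_eq_mul]
    _ = a ^ γ * ∫ θ in Ioi 0, θ ^ (-1 - γ) * (1 - exp (-θ)) := by
        rw [← mul_assoc, ← rpow_neg_one, ← rpow_add ha]
        norm_num

theorem integral_rpow_mul_one_sub_exp_pos {γ : ℝ} (hγ0 : 0 < γ) (hγ1 : γ < 1) :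
    0 < ∫ θ in Ioi 0, θ ^ (-1 - γ) * (1 - exp (-θ)) := by
  have hpos : ∀ θ ∈ Ioi (0 : ℝ), 0 < θ ^ (-1 - γ) * (1 - exp (-θ)) := fun θ hθ =>
    mul_pos (rpow_pos_of_pos hθ _) (sub_pos.2 (exp_lt_one_iff.2 (neg_lt_zero.2 hθ)))
  have hint := integrableOn_rpow_mul_one_sub_exp hγ0 hγ1 zero_le_one
  simp only [one_mul] at hint
  rw [setIntegral_pos_iff_support_of_nonneg_ae
    ((ae_restrict_mem measurableSet_Ioi).mono fun θ hθ => (hpos θ hθ).le) hint]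
  calc (0 : ENNReal) < volume (Ioi (0 : ℝ)) := by simp
    _ ≤ _ := measure_mono fun θ hθ => by exact ⟨(hpos θ hθ).ne', hθ⟩

theorem posSemidef_exp_neg_max_sub_exp_neg_add {θ : ℝ} (hθ : 0 ≤ θ) {t : ι → ℝ}
    (ht : ∀ i, 0 ≤ t i) :
    (of fun i j => exp (-(max (t i) (t j) * θ)) - exp (-((t i + t j) * θ))).PosSemidef := by
  classical
  let f : StieltjesFunction ℝ :=
    { toFun x := exp (x * θ)
      mono' _ _ hxy := exp_le_exp.2 (mul_le_mul_of_nonneg_right hxy hθ)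
      right_continuous' _ := (by fun_prop : Continuous fun x => exp (x * θ)).continuousWithinAt }
  convert (f.posSemidef_min_sub ht).conjTranspose_mul_mul_same
    (diagonal fun i => exp (-(t i * θ))) using 1
  ext i j
  have hsum : min (t i) (t j) + max (t i) (t j) = t i + t j := min_add_max _ _
  simp only [of_apply, diagonal_conjTranspose, diagonal_mul, mul_diagonal, star_trivial]
  change _ = exp (-(t i * θ)) * (exp (min (t i) (t j) * θ) - exp (0 * θ)) * exp (-(t j * θ))
  rw [mul_sub, sub_mul, ← exp_add, ← exp_add, ← exp_add, ← exp_add]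
  congr 2
  · linear_combination (-θ) * hsum
  · ring

theorem integrableOn_rpow_mul_exp_sub_exp {γ a b : ℝ} (hγ0 : 0 < γ) (hγ1 : γ < 1) (ha : 0 ≤ a)
    (hb : 0 ≤ b) :
    IntegrableOn (fun θ => θ ^ (-1 - γ) * (exp (-(a * θ)) - exp (-(b * θ)))) (Ioi 0) :=
  ((integrableOn_rpow_mul_one_sub_exp hγ0 hγ1 hb).sub
    (integrableOn_rpow_mul_one_sub_exp hγ0 hγ1 ha)).congr_fun
    (fun θ _ => by simp only [Pi.sub_apply]; ring)
    measurableSet_Ioi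

theorem Cker_eq_integral {γ s t : ℝ} (hγ0 : 0 < γ) (hγ1 : γ < 1) (hs : 0 ≤ s) (ht : 0 ≤ t) :
    Cker γ s t = (∫ θ in Ioi 0, θ ^ (-1 - γ) * (1 - exp (-θ)))⁻¹ *
      ∫ θ in Ioi 0, θ ^ (-1 - γ) * (exp (-(max s t * θ)) - exp (-((s + t) * θ))) := by
  have hmax : 0 ≤ max s t := le_max_of_le_left hs
  have hsum : 0 ≤ s + t := add_nonneg hs ht
  have hsplit : ∫ θ in Ioi 0, θ ^ (-1 - γ) * (exp (-(max s t * θ)) - exp (-((s + t) * θ))) =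
      (∫ θ in Ioi 0, θ ^ (-1 - γ) * (1 - exp (-((s + t) * θ)))) -
        ∫ θ in Ioi 0, θ ^ (-1 - γ) * (1 - exp (-(max s t * θ))) := by
    rw [← integral_sub (integrableOn_rpow_mul_one_sub_exp hγ0 hγ1 hsum)
      (integrableOn_rpow_mul_one_sub_exp hγ0 hγ1 hmax)]
    congr with θ
    ring
  rw [hsplit, integral_rpow_mul_one_sub_exp hγ0 hsum, integral_rpow_mul_one_sub_exp hγ0 hmax,
    Cker, ← sub_mul]
  field_simp [(integral_rpow_mul_one_sub_exp_pos hγ0 hγ1).ne']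

theorem posSemidef_Cker_of_lt_one {γ : ℝ} (hγ0 : 0 < γ) (hγ1 : γ < 1) {t : ι → ℝ}
    (ht : ∀ i, 0 ≤ t i) : (of fun i j => Cker γ (t i) (t j)).PosSemidef := by
  let K : ℝ → ℝ → ℝ → ℝ := fun θ s u =>
    θ ^ (-1 - γ) * (exp (-(max s u * θ)) - exp (-((s + u) * θ)))
  have hrepr : (of fun i j => Cker γ (t i) (t j)) =
      (∫ θ in Ioi 0, θ ^ (-1 - γ) * (1 - exp (-θ)))⁻¹ •
        of fun i j => ∫ θ in Ioi 0, K θ (t i) (t j) := by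
    ext i j
    exact Cker_eq_integral hγ0 hγ1 (ht i) (ht j)
  rw [hrepr]
  refine (posSemidef_integral ?_ fun i j => ?_).smul
    (inv_nonneg.2 (integral_rpow_mul_one_sub_exp_pos hγ0 hγ1).le)
  · refine (ae_restrict_mem measurableSet_Ioi).mono fun θ hθ => ?_
    exact (posSemidef_exp_neg_max_sub_exp_neg_add (le_of_lt hθ) ht).smul
      (rpow_nonneg (le_of_lt hθ) (-1 - γ))
  · exact integrableOn_rpow_mul_exp_sub_exp hγ0 hγ1 (le_max_of_le_left (ht i))
      (add_nonneg (ht i) (ht j))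

theorem posSemidef_Cker_one {t : ι → ℝ} (ht : ∀ i, 0 ≤ t i) :
    (of fun i j => Cker 1 (t i) (t j)).PosSemidef := by
  convert StieltjesFunction.id.posSemidef_min_sub ht using 2
  ext i j
  simp only [Cker, rpow_one, StieltjesFunction.id_apply, id_eq, sub_zero]
  linarith [min_add_max (t i) (t j)]

theorem posSemidef_Cker {γ : ℝ} (hγ0 : 0 < γ) (hγ1 : γ ≤ 1) {t : ι → ℝ} (ht : ∀ i, 0 ≤ t i) :
    (of fun i j => Cker γ (t i) (t j)).PosSemidef := by
  rcases hγ1.lt_or_eq with hγ1 | rfl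
  · exact posSemidef_Cker_of_lt_one hγ0 hγ1 ht
  · exact posSemidef_Cker_one ht

/-- For `0 < γ ≤ 1`, the kernel `C_γ` is nonnegative definite on `[0,∞)`. -/
theorem Cker_nonneg_definite (γ : ℝ) (hγ0 : 0 < γ) (hγ1 : γ ≤ 1)
    (n : ℕ) (t : Fin n → ℝ) (ht : ∀ i, 0 ≤ t i) (z : Fin n → ℂ) :
    0 ≤ ∑ j : Fin n, ∑ k : Fin n,
      z j * ((Cker γ (t j) (t k) : ℝ) : ℂ) * (starRingEnd ℂ) (z k) := by
  simpa [dotProduct, mulVec, Finset.mul_sum, mul_assoc] using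
    (posSemidef_Cker hγ0 hγ1 ht).map_ofReal.dotProduct_mulVec_nonneg (star z)
end

section
/- For every γ with 0 < γ ≤ 1, the kernel Q_γ on the nonnegative half-line defined by Q_γ(s,t) = (max(s,t))^γ − |t−s|^γ is nonnegative definite; that is, for every n ∈ ℕ, all t_1,…,t_n ≥ 0, and all complex numbers z_1,…,z_n, one has Σ_{j,k=1}^n z_j · Q_γ(t_j,t_k) · conj(z_k) ≥ 0 (this sum is real and nonnegative). -/
/-!
Let `A_s ⊆ ℝ²` be the region under the curve `u ↦ γ (s - u)^(γ - 1)` over `(0, s)`. Since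
`γ ≤ 1`, these curves decrease as `s` grows, so for `s ≤ t` the intersection `A_s ∩ A_t` is the
region under the `t`-curve over `(0, s)`, whose area is `∫₀ˢ γ (t - u)^(γ - 1) du = t^γ - (t - s)^γ
= Q_γ(s, t)`. Hence `Q_γ(t_j, t_k) = ⟪1_{A_{t_j}}, 1_{A_{t_k}}⟫` in `L²(ℝ²)` is a Gram matrix.
-/

open scoped ComplexOrder

/-- The kernel `Q_γ(s,t) = (max(s,t))^γ − |t−s|^γ`. -/
noncomputable def Qker (γ s t : ℝ) : ℝ := max s t ^ γ - |t - s| ^ γ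

open MeasureTheory Set

theorem Matrix.PosSemidef.sum_mul_mul_starRingEnd_nonneg {n R : Type*} [Fintype n] [CommRing R]
    [PartialOrder R] [StarRing R] {M : Matrix n n R} (hM : M.PosSemidef) (z : n → R) :
    0 ≤ ∑ j, ∑ k, z j * M j k * starRingEnd R (z k) := by
  convert hM.dotProduct_mulVec_nonneg (star z) using 1
  simp only [dotProduct, Matrix.mulVec, Finset.mul_sum, Pi.star_apply, star_star, mul_assoc]
  rfl

theorem posSemidef_of_measureReal_inter {ι α 𝕜 : Type*} [Finite ι] [RCLike 𝕜] [MeasurableSpace α]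
    (μ : Measure α) {A : ι → Set α} (hA : ∀ i, MeasurableSet (A i)) (hμA : ∀ i, μ (A i) ≠ ⊤) :
    (Matrix.of fun i j => (μ.real (A i ∩ A j) : 𝕜)).PosSemidef := by
  convert Matrix.posSemidef_gram 𝕜 fun i => indicatorConstLp 2 (hA i) (hμA i) (1 : 𝕜)
  ext i j
  rw [Matrix.gram_apply, Matrix.of_apply,
    L2.inner_indicatorConstLp_one_indicatorConstLp_one (hA i) (hA j) (hμA i) (hμA j)]

theorem Qker_symm (γ s t : ℝ) : Qker γ s t = Qker γ t s := by
  rw [Qker, Qker, max_comm, abs_sub_comm]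

theorem Qker_of_le {γ s t : ℝ} (hst : s ≤ t) : Qker γ s t = t ^ γ - (t - s) ^ γ := by
  rw [Qker, max_eq_right hst, abs_of_nonneg (sub_nonneg.2 hst)]

theorem Qker_nonneg_of_le {γ s t : ℝ} (hγ : 0 ≤ γ) (hs : 0 ≤ s) (hst : s ≤ t) :
    0 ≤ Qker γ s t := by
  rw [Qker_of_le hst, sub_nonneg]
  exact Real.rpow_le_rpow (by linarith) (by linarith) hγ

theorem intervalIntegrable_mul_sub_rpow {γ s t : ℝ} (hγ : 0 < γ) :
    IntervalIntegrable (fun u => γ * (t - u) ^ (γ - 1)) volume 0 s := by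
  have h := (intervalIntegral.intervalIntegrable_rpow' (r := γ - 1) (a := t - s) (b := t)
    (by linarith)).comp_sub_left t
  rw [sub_sub_cancel, sub_self] at h
  exact h.symm.const_mul γ

theorem Qker_eq_intervalIntegral {γ s t : ℝ} (hγ : 0 < γ) (hst : s ≤ t) :
    Qker γ s t = ∫ u in 0..s, γ * (t - u) ^ (γ - 1) := by
  rw [intervalIntegral.integral_const_mul, intervalIntegral.integral_comp_sub_left
    (fun x => x ^ (γ - 1)), integral_rpow (Or.inl (by linarith)), sub_zero, sub_add_cancel,
    Qker_of_le hst]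
  field_simp

noncomputable def Qregion (γ s : ℝ) : Set (ℝ × ℝ) :=
  regionBetween 0 (fun u => γ * (s - u) ^ (γ - 1)) (Ioo 0 s)

theorem measurableSet_Qregion (γ s : ℝ) : MeasurableSet (Qregion γ s) :=
  measurableSet_regionBetween measurable_const (by fun_prop) measurableSet_Ioo

theorem Qregion_inter_of_le {γ s t : ℝ} (hγ0 : 0 ≤ γ) (hγ1 : γ ≤ 1) (hst : s ≤ t) :
    Qregion γ s ∩ Qregion γ t = regionBetween 0 (fun u => γ * (t - u) ^ (γ - 1)) (Ioo 0 s) := by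
  ext ⟨u, v⟩
  simp only [Qregion, regionBetween, mem_inter_iff, mem_ofPred_eq, mem_Ioo, Pi.zero_apply]
  constructor
  · rintro ⟨⟨hu, -⟩, -, hv⟩
    exact ⟨hu, hv⟩
  · rintro ⟨⟨hu0, hus⟩, hv0, hvt⟩
    have hdecr : (t - u) ^ (γ - 1) ≤ (s - u) ^ (γ - 1) :=
      Real.rpow_le_rpow_of_nonpos (by linarith) (by linarith) (by linarith)
    exact ⟨⟨⟨hu0, hus⟩, hv0, hvt.trans_le (by gcongr)⟩, ⟨hu0, by linarith⟩, hv0, hvt⟩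

theorem volume_regionBetween_mul_sub_rpow {γ s t : ℝ} (hγ : 0 < γ) (hs : 0 ≤ s) (hst : s ≤ t) :
    volume (regionBetween 0 (fun u => γ * (t - u) ^ (γ - 1)) (Ioo 0 s)) =
      ENNReal.ofReal (Qker γ s t) := by
  have hint := (intervalIntegrable_iff_integrableOn_Ioo_of_le hs).1
    (intervalIntegrable_mul_sub_rpow (t := t) hγ)
  have hzero : IntegrableOn (0 : ℝ → ℝ) (Ioo 0 s) := integrableOn_zero
  rw [Measure.volume_eq_prod,
    volume_regionBetween_eq_integral hzero hint measurableSet_Ioo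
      fun u hu => mul_nonneg hγ.le (Real.rpow_nonneg (by linarith [hu.2]) _),
    Qker_eq_intervalIntegral hγ hst, intervalIntegral.integral_of_le hs,
    integral_Ioc_eq_integral_Ioo]
  simp only [Pi.sub_apply, Pi.zero_apply, sub_zero]

theorem volume_Qregion_ne_top {γ s : ℝ} (hγ : 0 < γ) (hs : 0 ≤ s) :
    volume (Qregion γ s) ≠ ⊤ := by
  rw [Qregion, volume_regionBetween_mul_sub_rpow hγ hs le_rfl]
  exact ENNReal.ofReal_ne_top

theorem measureReal_Qregion_inter {γ s t : ℝ} (hγ0 : 0 < γ) (hγ1 : γ ≤ 1) (hs : 0 ≤ s)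
    (ht : 0 ≤ t) : volume.real (Qregion γ s ∩ Qregion γ t) = Qker γ s t := by
  wlog hst : s ≤ t generalizing s t
  · rw [inter_comm, Qker_symm]
    exact this ht hs (le_of_not_ge hst)
  rw [measureReal_def, Qregion_inter_of_le hγ0.le hγ1 hst,
    volume_regionBetween_mul_sub_rpow hγ0 hs hst,
    ENNReal.toReal_ofReal (Qker_nonneg_of_le hγ0.le hs hst)]

/-- For `0 < γ ≤ 1`, the kernel `Q_γ` is nonnegative definite on `[0,∞)`. -/
theorem Qker_nonneg_definite (γ : ℝ) (hγ0 : 0 < γ) (hγ1 : γ ≤ 1)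
    (n : ℕ) (t : Fin n → ℝ) (ht : ∀ i, 0 ≤ t i) (z : Fin n → ℂ) :
    0 ≤ ∑ j : Fin n, ∑ k : Fin n,
      z j * ((Qker γ (t j) (t k) : ℝ) : ℂ) * (starRingEnd ℂ) (z k) := by
  have hgram : ∀ j k, Qker γ (t j) (t k) = volume.real (Qregion γ (t j) ∩ Qregion γ (t k)) :=
    fun j k => (measureReal_Qregion_inter hγ0 hγ1 (ht j) (ht k)).symm
  simp_rw [hgram]
  exact (posSemidef_of_measureReal_inter volume (fun j => measurableSet_Qregion γ (t j))
    fun j => volume_Qregion_ne_top hγ0 (ht j)).sum_mul_mul_starRingEnd_nonneg z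
end

section
/- For every γ > 1, the kernel Q_γ defined by Q_γ(s,t) = (max(s,t))^γ − |t−s|^γ on [0,∞) × [0,∞) is NOT nonnegative definite: there exist n ∈ ℕ, points t_1,…,t_n ≥ 0, and complex numbers z_1,…,z_n such that Σ_{j,k=1}^n z_j · Q_γ(t_j,t_k) · conj(z_k) < 0. -/
/-!
On two points `s, t` a nonnegative definite kernel satisfies the Cauchy–Schwarz inequality
`K(s,t)² ≤ K(s,s) K(t,t)`. For `Q_γ` at `s = 1`, `t = 1 + ε` this reads
`((1+ε)^γ - ε^γ)² ≤ (1+ε)^γ`, which fails for small `ε`: by Bernoulli the left side exceeds the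
right by about `γε`, while the correction `ε^γ` is `o(ε)` because `γ > 1`.
-/

open scoped ComplexOrder

/-- The form at `z = (-K(s,t), K(s,s))` equals `K(s,s) · (K(s,s) K(t,t) - K(s,t)²)`. -/
theorem exists_two_point_form_neg {K : ℝ → ℝ → ℝ} {s t : ℝ} (hsymm : K t s = K s t)
    (hs : 0 < K s s) (hcs : K s s * K t t < K s t ^ 2) :
    ∃ z : Fin 2 → ℂ, ∑ j : Fin 2, ∑ k : Fin 2,
      z j * ((K (![s, t] j) (![s, t] k) : ℝ) : ℂ) * starRingEnd ℂ (z k) < 0 := by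
  refine ⟨![((-K s t : ℝ) : ℂ), ((K s s : ℝ) : ℂ)], ?_⟩
  have hform : ∑ j : Fin 2, ∑ k : Fin 2,
      (![((-K s t : ℝ) : ℂ), ((K s s : ℝ) : ℂ)] : Fin 2 → ℂ) j *
        ((K (![s, t] j) (![s, t] k) : ℝ) : ℂ) *
        starRingEnd ℂ ((![((-K s t : ℝ) : ℂ), ((K s s : ℝ) : ℂ)] : Fin 2 → ℂ) k) =
      ((K s s * (K s s * K t t - K s t ^ 2) : ℝ) : ℂ) := by
    simp only [Fin.sum_univ_two, Matrix.cons_val_zero, Matrix.cons_val_one, Complex.conj_ofReal,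
      hsymm]
    push_cast
    ring
  rw [hform, ← Complex.ofReal_zero, Complex.real_lt_real]
  exact mul_neg_of_pos_of_neg hs (by linarith)

theorem Qker_comm (γ s t : ℝ) : Qker γ t s = Qker γ s t := by
  rw [Qker, Qker, max_comm, abs_sub_comm]

theorem Qker_self {γ : ℝ} (hγ : γ ≠ 0) (t : ℝ) : Qker γ t t = t ^ γ := by
  rw [Qker, max_self, sub_self, abs_zero, Real.zero_rpow hγ, sub_zero]

theorem Qker_one_one_add {ε : ℝ} (hε : 0 ≤ ε) (γ : ℝ) :
    Qker γ 1 (1 + ε) = (1 + ε) ^ γ - ε ^ γ := by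
  rw [Qker, max_eq_right (by linarith), add_sub_cancel_left, abs_of_nonneg hε]

theorem rpow_one_add_lt_sq_sub_rpow {γ ε : ℝ} (hγ : 1 < γ) (hε : 0 < ε)
    (hsmall : 2 * ε ^ (γ - 1) < γ) :
    (1 + ε) ^ γ < ((1 + ε) ^ γ - ε ^ γ) ^ 2 := by
  have hbernoulli : 1 + γ * ε ≤ (1 + ε) ^ γ :=
    one_add_mul_self_le_rpow_one_add (by linarith) hγ.le
  have hpow : ε ^ γ = ε ^ (γ - 1) * ε := by
    rw [← Real.rpow_add_one hε.ne', sub_add_cancel]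
  have hcorr : 2 * ε ^ γ < γ * ε := by
    rw [hpow, ← mul_assoc]
    exact mul_lt_mul_of_pos_right hsmall hε
  -- `(B - a)² - B = B (B - 1 - 2a) + a²` with `B = (1+ε)^γ`, `a = ε^γ`.
  nlinarith [Real.rpow_pos_of_pos hε γ]

/-- For `γ > 1`, the kernel `Q_γ` is NOT nonnegative definite on `[0,∞)`: some
quadratic form with nonnegative time points takes a negative value. -/
theorem Qker_not_nonneg_definite (γ : ℝ) (hγ : 1 < γ) :
    ∃ (n : ℕ) (t : Fin n → ℝ) (z : Fin n → ℂ), (∀ i, 0 ≤ t i) ∧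
      (∑ j : Fin n, ∑ k : Fin n,
        z j * ((Qker γ (t j) (t k) : ℝ) : ℂ) * (starRingEnd ℂ) (z k)) < 0 := by
  set ε : ℝ := (γ / 4) ^ (γ - 1)⁻¹
  have hε : 0 < ε := by positivity
  have hsmall : 2 * ε ^ (γ - 1) < γ := by
    rw [Real.rpow_inv_rpow (by positivity) (by linarith)]
    linarith
  have hcs : Qker γ 1 1 * Qker γ (1 + ε) (1 + ε) < Qker γ 1 (1 + ε) ^ 2 := by
    rw [Qker_self (by linarith), Qker_self (by linarith), Qker_one_one_add hε.le,
      Real.one_rpow, one_mul]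
    exact rpow_one_add_lt_sq_sub_rpow hγ hε hsmall
  have hone : 0 < Qker γ 1 1 := by
    rw [Qker_self (by linarith), Real.one_rpow]
    exact one_pos
  obtain ⟨z, hz⟩ := exists_two_point_form_neg (Qker_comm γ 1 (1 + ε)) hone hcs
  refine ⟨2, ![1, 1 + ε], z, Fin.forall_fin_two.2 ⟨zero_le_one, ?_⟩, hz⟩
  change (0 : ℝ) ≤ 1 + ε
  linarith
end

section
/- Let 0 < H ≤ 1/2 and let S_H denote the fractional Brownian motion covariance S_H(s,t) = (1/2)(s^{2H} + t^{2H} − |t−s|^{2H}). Then for all s,t ≥ 0, S_H(s,t) = (1/2)(Q_{2H}(s,t) + (min(s,t))^{2H}), where Q_γ(s,t) = (max(s,t))^γ − |t−s|^γ; in particular S_H is the sum of two nonnegative definite kernels, where (s,t) ↦ (min(s,t))^{2H} is the covariance of a time-rescaled Brownian motion. -/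
/-!
Since `s ^ γ + t ^ γ = max s t ^ γ + min s t ^ γ`, the identity is pure algebra. For
positivity, `min a b` is the `L²` inner product of `1_{(0,a)}` and `1_{(0,b)}`, so the min
kernel on `[0, ∞)` is nonnegative definite, and so is `min (s ^ γ) (t ^ γ) = (min s t) ^ γ`.
For `0 < γ ≤ 1` put `g_s(y) = 1_{[0,s)}(y) (s - y)^(γ-1)`; as `γ - 1 ≤ 0`,
`min (g_s y) (g_t y) = 1_{[0, min s t)}(y) (max s t - y)^(γ-1)`, whose integral is
`Q_γ(s,t) / γ`. Thus `Q_γ` is an integral of min kernels evaluated at the nonnegative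
numbers `g_{t_i}(y)`, hence nonnegative definite. Real symmetric kernels with nonnegative
real quadratic forms have nonnegative complex (Hermitian) forms as well.
-/

open scoped ComplexOrder

/-- The fractional Brownian motion covariance with Hurst parameter `H`:
`S_H(s,t) = (1/2)(s^{2H} + t^{2H} − |t−s|^{2H})`. -/
noncomputable def Sfbm (H s t : ℝ) : ℝ :=
  (1 / 2) * (s ^ (2 * H) + t ^ (2 * H) - |t - s| ^ (2 * H))

/-- A kernel is nonnegative definite on `[0,∞)`. -/
def NonnegDefinite (F : ℝ → ℝ → ℝ) : Prop :=
  ∀ (n : ℕ) (t : Fin n → ℝ), (∀ i, 0 ≤ t i) → ∀ z : Fin n → ℂ,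
    0 ≤ ∑ j : Fin n, ∑ k : Fin n,
      z j * ((F (t j) (t k) : ℝ) : ℂ) * (starRingEnd ℂ) (z k)

open MeasureTheory Set

theorem quadForm_integral_nonneg {ι α : Type*} [Fintype ι] [MeasurableSpace α]
    {μ : Measure α} {K : ι → ι → α → ℝ} (hK : ∀ j k, Integrable (K j k) μ) (x : ι → ℝ)
    (hpos : ∀ y, 0 ≤ ∑ j, ∑ k, x j * x k * K j k y) :
    0 ≤ ∑ j, ∑ k, x j * x k * ∫ y, K j k y ∂μ := by
  have hint : ∀ j k, Integrable (fun y => x j * x k * K j k y) μ := fun j k =>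
    (hK j k).const_mul _
  simp_rw [← integral_const_mul, ← integral_finsetSum _ fun k _ => hint _ k]
  rw [← integral_finsetSum _ fun j _ => integrable_finsetSum _ fun k _ => hint j k]
  exact integral_nonneg hpos

theorem quadForm_min_nonneg {ι : Type*} [Fintype ι] {w : ι → ℝ} (hw : ∀ i, 0 ≤ w i)
    (x : ι → ℝ) : 0 ≤ ∑ j, ∑ k, x j * x k * min (w j) (w k) := by
  have hmin : ∀ j k, min (w j) (w k) = ∫ y, (Ioo 0 (w j) ∩ Ioo 0 (w k)).indicator 1 y := by
    intro j k
    rw [Ioo_inter_Ioo, integral_indicator_one measurableSet_Ioo,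
      Real.volume_real_Ioo_of_le (by simp [hw j, hw k]), max_self, sub_zero]
  simp_rw [hmin]
  refine quadForm_integral_nonneg (fun j k => ?_) x fun y => ?_
  · rw [Ioo_inter_Ioo]
    exact (integrable_indicator_iff measurableSet_Ioo).2
      (integrableOn_const measure_Ioo_lt_top.ne)
  · calc (0 : ℝ) ≤ (∑ j, x j * (Ioo 0 (w j)).indicator 1 y) ^ 2 := sq_nonneg _
      _ = _ := by
        simp_rw [sq, Finset.sum_mul_sum, inter_indicator_one, Pi.mul_apply]
        congr! 2
        ring

theorem complex_quadForm_nonneg_of_real {ι : Type*} [Fintype ι] {K : ι → ι → ℝ}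
    (hK : ∀ j k, K j k = K k j) (hpos : ∀ x : ι → ℝ, 0 ≤ ∑ j, ∑ k, x j * x k * K j k)
    (z : ι → ℂ) : 0 ≤ ∑ j, ∑ k, z j * (K j k : ℂ) * starRingEnd ℂ (z k) := by
  set a := fun i => (z i).re
  set b := fun i => (z i).im
  have hterm : ∀ j k, z j * (K j k : ℂ) * starRingEnd ℂ (z k) =
      ((a j * a k * K j k + b j * b k * K j k : ℝ) : ℂ)
        + ((K j k * (b j * a k - a j * b k) : ℝ) : ℂ) * Complex.I := by
    intro j k
    rw [← Complex.re_add_im (z j), ← Complex.re_add_im (z k)]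
    simp only [map_add, map_mul, Complex.conj_ofReal, Complex.conj_I, a, b]
    push_cast
    linear_combination (-(K j k : ℂ) * (z j).im * (z k).im) * Complex.I_sq
  have him : ∑ j, ∑ k, K j k * (b j * a k - a j * b k) = 0 := by
    refine self_eq_neg.mp ?_
    calc _ = ∑ j, ∑ k, K k j * (b k * a j - a k * b j) := Finset.sum_comm
      _ = _ := by
        simp_rw [← Finset.sum_neg_distrib, hK _ _]
        congr! 2
        ring
  simp_rw [hterm, Finset.sum_add_distrib, ← Complex.ofReal_sum, ← Finset.sum_mul,
    ← Complex.ofReal_sum, him]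
  simp only [Complex.ofReal_zero, zero_mul, add_zero, Complex.zero_le_real]
  simpa only [Finset.sum_add_distrib] using add_nonneg (hpos a) (hpos b)

namespace NonnegDefinite

theorem of_real {F : ℝ → ℝ → ℝ} (hsymm : ∀ s t, F s t = F t s)
    (hreal : ∀ (n : ℕ) (t : Fin n → ℝ), (∀ i, 0 ≤ t i) →
      ∀ x : Fin n → ℝ, 0 ≤ ∑ j, ∑ k, x j * x k * F (t j) (t k)) :
    NonnegDefinite F := fun n t ht =>
  complex_quadForm_nonneg_of_real (fun j k => hsymm (t j) (t k)) (hreal n t ht)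

theorem const_mul {F : ℝ → ℝ → ℝ} (hF : NonnegDefinite F) {c : ℝ} (hc : 0 ≤ c) :
    NonnegDefinite fun s t => c * F s t := by
  intro n t ht z
  have h : ∑ j, ∑ k, z j * ((c * F (t j) (t k) : ℝ) : ℂ) * starRingEnd ℂ (z k) =
      c * ∑ j, ∑ k, z j * (F (t j) (t k) : ℂ) * starRingEnd ℂ (z k) := by
    simp_rw [Finset.mul_sum]
    congr! 2
    push_cast
    ring
  rw [h]
  exact mul_nonneg (by exact_mod_cast hc) (hF n t ht z)

end NonnegDefinite

theorem Real.rpow_min {x y p : ℝ} (hx : 0 ≤ x) (hy : 0 ≤ y) (hp : 0 ≤ p) :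
    min x y ^ p = min (x ^ p) (y ^ p) := by
  rcases le_total x y with hxy | hxy
  · rw [min_eq_left hxy, min_eq_left (by gcongr)]
  · rw [min_eq_right hxy, min_eq_right (by gcongr)]

theorem nonnegDefinite_rpow_min {γ : ℝ} (hγ : 0 ≤ γ) :
    NonnegDefinite fun s t => min s t ^ γ := by
  refine .of_real (fun s t => by rw [min_comm]) fun n t ht x => ?_
  simp_rw [Real.rpow_min (ht _) (ht _) hγ]
  exact quadForm_min_nonneg (fun i => Real.rpow_nonneg (ht i) γ) x

noncomputable def rlKernel (γ s y : ℝ) : ℝ :=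
  (Ico 0 s).indicator (fun y => (s - y) ^ (γ - 1)) y

theorem rlKernel_nonneg (γ s y : ℝ) : 0 ≤ rlKernel γ s y :=
  indicator_nonneg (fun _ hy => Real.rpow_nonneg (sub_nonneg.2 hy.2.le) _) y

theorem min_rlKernel_of_le {γ s t : ℝ} (hγ : γ ≤ 1) (hst : s ≤ t) (y : ℝ) :
    min (rlKernel γ s y) (rlKernel γ t y) =
      (Ico 0 s).indicator (fun y => (t - y) ^ (γ - 1)) y := by
  by_cases hy : y ∈ Ico 0 s
  · have hyt : y ∈ Ico 0 t := ⟨hy.1, hy.2.trans_le hst⟩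
    simp only [rlKernel, indicator_of_mem hy, indicator_of_mem hyt]
    exact min_eq_right <|
      Real.rpow_le_rpow_of_nonpos (sub_pos.2 hy.2) (by linarith) (by linarith)
  · simp only [rlKernel, indicator_of_notMem hy]
    exact min_eq_left (rlKernel_nonneg γ t y)

theorem min_rlKernel {γ : ℝ} (hγ : γ ≤ 1) (s t y : ℝ) :
    min (rlKernel γ s y) (rlKernel γ t y) =
      (Ico 0 (min s t)).indicator (fun y => (max s t - y) ^ (γ - 1)) y := by
  rcases le_total s t with h | h
  · rw [min_eq_left h, max_eq_right h, min_rlKernel_of_le hγ h]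
  · rw [min_eq_right h, max_eq_left h, min_comm, min_rlKernel_of_le hγ h]

theorem integrableOn_sub_rpow_Ico {γ : ℝ} (hγ : 0 < γ) (m v : ℝ) :
    IntegrableOn (fun y => (v - y) ^ (γ - 1)) (Ico 0 m) := by
  have h := (intervalIntegral.intervalIntegrable_rpow' (r := γ - 1) (by linarith)).comp_sub_left
    v (a := v - m) (b := v - 0)
  simp only [sub_sub_cancel] at h
  rw [integrableOn_Ico_iff_integrableOn_Ioo, ← integrableOn_Ioc_iff_integrableOn_Ioo]
  exact h.symm.1

theorem integral_sub_rpow_Ico {γ m : ℝ} (hγ : 0 < γ) (hm : 0 ≤ m) (v : ℝ) :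
    ∫ y in Ico 0 m, (v - y) ^ (γ - 1) = (v ^ γ - (v - m) ^ γ) / γ := by
  rw [integral_Ico_eq_integral_Ioo, ← integral_Ioc_eq_integral_Ioo,
    ← intervalIntegral.integral_of_le hm,
    intervalIntegral.integral_comp_sub_left (fun x => x ^ (γ - 1)), sub_zero,
    integral_rpow (Or.inl (by linarith)), sub_add_cancel]

theorem integrable_min_rlKernel {γ : ℝ} (hγ0 : 0 < γ) (hγ1 : γ ≤ 1) (s t : ℝ) :
    Integrable fun y => min (rlKernel γ s y) (rlKernel γ t y) := by
  simp_rw [min_rlKernel hγ1]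
  exact (integrableOn_sub_rpow_Ico hγ0 _ _).integrable_indicator measurableSet_Ico

theorem Qker_eq_integral_min_rlKernel {γ s t : ℝ} (hγ0 : 0 < γ) (hγ1 : γ ≤ 1) (hs : 0 ≤ s)
    (ht : 0 ≤ t) : Qker γ s t = γ * ∫ y, min (rlKernel γ s y) (rlKernel γ t y) := by
  simp_rw [min_rlKernel hγ1, integral_indicator measurableSet_Ico,
    integral_sub_rpow_Ico hγ0 (le_min hs ht), max_sub_min_eq_abs, Qker]
  field_simp

theorem nonnegDefinite_Qker {γ : ℝ} (hγ0 : 0 < γ) (hγ1 : γ ≤ 1) :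
    NonnegDefinite (Qker γ) := by
  refine .of_real (fun s t => by rw [Qker, Qker, max_comm, abs_sub_comm]) fun n t ht x => ?_
  simp_rw [Qker_eq_integral_min_rlKernel hγ0 hγ1 (ht _) (ht _), mul_left_comm _ γ,
    ← Finset.mul_sum]
  exact mul_nonneg hγ0.le <| quadForm_integral_nonneg
    (fun j k => integrable_min_rlKernel hγ0 hγ1 _ _) x
    fun y => quadForm_min_nonneg (fun i => rlKernel_nonneg γ (t i) y) x

theorem Sfbm_eq_half_Qker_add_min (H s t : ℝ) :
    Sfbm H s t = 1 / 2 * (Qker (2 * H) s t + min s t ^ (2 * H)) := by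
  unfold Sfbm Qker
  rcases le_total s t with h | h
  · rw [max_eq_right h, min_eq_left h]
    ring
  · rw [max_eq_left h, min_eq_right h]
    ring

/-- For `0 < H ≤ 1/2`, `S_H(s,t) = (1/2)(Q_{2H}(s,t) + (min(s,t))^{2H})`, and
`S_H` is the sum of two nonnegative definite kernels: `(1/2)Q_{2H}` and
`(1/2)(min(s,t))^{2H}`, the latter being the covariance of a time-rescaled
Brownian motion. -/
theorem Sfbm_decomposition (H : ℝ) (hH0 : 0 < H) (hH1 : H ≤ 1 / 2) :
    (∀ s t : ℝ, 0 ≤ s → 0 ≤ t →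
      Sfbm H s t = (1 / 2) * (Qker (2 * H) s t + min s t ^ (2 * H))) ∧
    NonnegDefinite (fun s t => (1 / 2) * Qker (2 * H) s t) ∧
    NonnegDefinite (fun s t => (1 / 2) * min s t ^ (2 * H)) :=
  ⟨fun s t _ _ => Sfbm_eq_half_Qker_add_min H s t,
    (nonnegDefinite_Qker (by positivity) (by linarith)).const_mul (by norm_num),
    (nonnegDefinite_rpow_min (by positivity)).const_mul (by norm_num)⟩
end

section
/- For every γ with 0 < γ < 1 and all s,t ≥ 0, the kernel Q_γ(s,t) = (max(s,t))^γ − |t−s|^γ admits the integral representation Q_γ(s,t) = c_γ · ∫₀^∞ e^{−|t−s|y}·(1 − e^{−min(s,t)·y})·y^{−(1+γ)} dy, where c_γ = γ/Γ(1−γ) and Γ is the Euler Gamma function. -/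
/-!
Since `|t − s| + min(s,t) = max(s,t)`, the integrand is
`((1 − e^{−max(s,t) y}) − (1 − e^{−|t−s| y})) y^{−(1+γ)}`, so it suffices to show that
`∫₀^∞ (1 − e^{−ay}) y^{−(1+γ)} dy = a^γ Γ(1−γ)/γ` for `a ≥ 0`. Integrating by parts against
`(y^{−γ})' = −γ y^{−(1+γ)}` (the boundary term at `0` vanishes because `1 − e^{−ay} ≤ ay`)
turns this into `(a/γ) ∫₀^∞ y^{−γ} e^{−ay} dy = (a/γ) a^{γ−1} Γ(1−γ)`.
-/

open MeasureTheory Set Filter Topology Real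

lemma one_sub_exp_neg_nonneg {x : ℝ} (hx : 0 ≤ x) : 0 ≤ 1 - exp (-x) :=
  sub_nonneg.2 (exp_le_one_iff.2 (neg_nonpos.2 hx))

lemma one_sub_exp_neg_le_one (x : ℝ) : 1 - exp (-x) ≤ 1 :=
  sub_le_self _ (exp_pos _).le

lemma one_sub_exp_neg_le (x : ℝ) : 1 - exp (-x) ≤ x := by
  linarith [one_sub_le_exp_neg x]

lemma one_sub_exp_neg_mul_mul_rpow_le {a y : ℝ} (hy : 0 < y) (p : ℝ) :
    (1 - exp (-(a * y))) * y ^ p ≤ a * y ^ (p + 1) :=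
  calc (1 - exp (-(a * y))) * y ^ p ≤ a * y * y ^ p := by
        gcongr
        exact one_sub_exp_neg_le _
    _ = a * y ^ (p + 1) := by rw [rpow_add_one hy.ne']; ring

section

variable {γ a : ℝ}

lemma integral_rpow_neg_mul_exp_neg_mul (hγ : γ < 1) (ha : 0 < a) :
    ∫ y in Ioi 0, y ^ (-γ) * exp (-(a * y)) = a ^ (γ - 1) * Gamma (1 - γ) := by
  have h := integral_rpow_mul_exp_neg_mul_Ioi (sub_pos.2 hγ) ha
  rwa [sub_sub_cancel_left, one_div, inv_rpow ha.le, ← rpow_neg ha.le, neg_sub] at h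

lemma integrableOn_rpow_neg_mul_exp_neg_mul (hγ : γ < 1) (ha : 0 < a) :
    IntegrableOn (fun y => y ^ (-γ) * exp (-(a * y))) (Ioi 0) :=
  Integrable.of_integral_ne_zero <| by
    rw [integral_rpow_neg_mul_exp_neg_mul hγ ha]
    exact (mul_pos (rpow_pos_of_pos ha _) (Gamma_pos_of_pos (sub_pos.2 hγ))).ne'

lemma integrableOn_one_sub_exp_neg_mul_mul_rpow (hγ0 : 0 < γ) (hγ1 : γ < 1) (ha : 0 ≤ a) :
    IntegrableOn (fun y => (1 - exp (-(a * y))) * y ^ (-(1 + γ))) (Ioi 0) := by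
  have hmeas : AEStronglyMeasurable (fun y => (1 - exp (-(a * y))) * y ^ (-(1 + γ))) :=
    (by fun_prop : Measurable _).aestronglyMeasurable
  rw [← Ioc_union_Ioi_eq_Ioi zero_le_one]
  refine IntegrableOn.union ?_ ?_
  · have hbound : IntegrableOn (fun y => a * y ^ (-γ)) (Ioc 0 1) :=
      ((intervalIntegrable_iff_integrableOn_Ioc_of_le zero_le_one).1
        (intervalIntegral.intervalIntegrable_rpow' (by linarith))).const_mul a
    refine hbound.mono' hmeas.restrict <| (ae_restrict_iff' measurableSet_Ioc).2 <|
      .of_forall fun y ⟨hy, _⟩ => ?_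
    rw [norm_of_nonneg (mul_nonneg (one_sub_exp_neg_nonneg (by positivity)) (by positivity))]
    simpa using one_sub_exp_neg_mul_mul_rpow_le hy (-(1 + γ))
  · have hbound : IntegrableOn (fun y : ℝ => y ^ (-(1 + γ))) (Ioi 1) :=
      integrableOn_Ioi_rpow_of_lt (by linarith) one_pos
    refine hbound.mono' hmeas.restrict <| (ae_restrict_iff' measurableSet_Ioi).2 <|
      .of_forall fun y (hy : 1 < y) => ?_
    have hpow : 0 ≤ y ^ (-(1 + γ)) := by positivity
    rw [norm_of_nonneg (mul_nonneg (one_sub_exp_neg_nonneg (by positivity)) hpow)]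
    exact mul_le_of_le_one_left hpow (one_sub_exp_neg_le_one _)

lemma mul_integral_one_sub_exp_neg_mul_mul_rpow_eq_mul_integral (hγ0 : 0 < γ) (hγ1 : γ < 1)
    (ha : 0 < a) :
    γ * ∫ y in Ioi 0, (1 - exp (-(a * y))) * y ^ (-(1 + γ)) =
      a * ∫ y in Ioi 0, y ^ (-γ) * exp (-(a * y)) := by
  set F : ℝ → ℝ := fun y => (1 - exp (-(a * y))) * y ^ (-γ)
  have hderiv : ∀ y ∈ Ioi (0 : ℝ), HasDerivAt F
      (a * (y ^ (-γ) * exp (-(a * y))) - γ * ((1 - exp (-(a * y))) * y ^ (-(1 + γ)))) y := by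
    intro y (hy : 0 < y)
    have hexp : HasDerivAt (fun y => 1 - exp (-(a * y))) (exp (-(a * y)) * a) y := by
      simpa using (((hasDerivAt_id y).const_mul a).neg.exp).const_sub 1
    refine (hexp.mul (hasDerivAt_rpow_const (p := -γ) (Or.inl hy.ne'))).congr_deriv ?_
    rw [show -γ - 1 = -(1 + γ) by ring]
    ring
  have hcont : ContinuousWithinAt F (Ici 0) 0 := by
    have hF0 : F 0 = 0 := by simp [F]
    rw [← continuousWithinAt_Ioi_iff_Ici, ContinuousWithinAt, hF0]
    have hpow : Tendsto (fun y : ℝ => a * y ^ (-γ + 1)) (𝓝[>] 0) (𝓝 0) := by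
      have hc : ContinuousAt (fun y : ℝ => a * y ^ (-γ + 1)) 0 :=
        (continuousAt_id.rpow_const (Or.inr (by linarith))).const_mul a
      simpa [zero_rpow (show -γ + 1 ≠ 0 by linarith)] using
        hc.tendsto.mono_left nhdsWithin_le_nhds
    refine squeeze_zero' ?_ ?_ (by simpa [F] using hpow)
    · filter_upwards [self_mem_nhdsWithin] with y (hy : 0 < y)
      exact mul_nonneg (one_sub_exp_neg_nonneg (by positivity)) (by positivity)
    · filter_upwards [self_mem_nhdsWithin] with y (hy : 0 < y)
      exact one_sub_exp_neg_mul_mul_rpow_le hy _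
  have hlim : Tendsto F atTop (𝓝 0) := by
    have hexp : Tendsto (fun y => exp (-(a * y))) atTop (𝓝 0) :=
      tendsto_exp_neg_atTop_nhds_zero.comp (tendsto_id.const_mul_atTop ha)
    simpa using (tendsto_const_nhds.sub hexp).mul (tendsto_rpow_neg_atTop hγ0)
  have hG := integrableOn_rpow_neg_mul_exp_neg_mul hγ1 ha
  have hg := integrableOn_one_sub_exp_neg_mul_mul_rpow hγ0 hγ1 ha.le
  have hFTC := integral_Ioi_of_hasDerivAt_of_tendsto hcont hderiv
    ((hG.const_mul a).sub (hg.const_mul γ)) hlim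
  rw [integral_sub (hG.const_mul a) (hg.const_mul γ), integral_const_mul,
    integral_const_mul] at hFTC
  simp only [F, mul_zero, neg_zero, exp_zero, sub_self, zero_mul] at hFTC
  linarith

theorem div_Gamma_mul_integral_one_sub_exp_neg_mul_mul_rpow (hγ0 : 0 < γ) (hγ1 : γ < 1)
    (ha : 0 ≤ a) :
    γ / Gamma (1 - γ) * ∫ y in Ioi 0, (1 - exp (-(a * y))) * y ^ (-(1 + γ)) = a ^ γ := by
  rcases ha.eq_or_lt with rfl | ha
  · simp [zero_rpow hγ0.ne']
  have hΓ : Gamma (1 - γ) ≠ 0 := (Gamma_pos_of_pos (sub_pos.2 hγ1)).ne'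
  have haγ : a * a ^ (γ - 1) = a ^ γ := by
    rw [← rpow_one_add' ha.le (by linarith), add_sub_cancel]
  rw [div_mul_eq_mul_div,
    mul_integral_one_sub_exp_neg_mul_mul_rpow_eq_mul_integral hγ0 hγ1 ha,
    integral_rpow_neg_mul_exp_neg_mul hγ1 ha, ← mul_assoc, haγ, mul_div_cancel_right₀ _ hΓ]

end

theorem Qker_integral_repr_general (γ : ℝ) (hγ0 : 0 < γ) (hγ1 : γ < 1)
    (s t : ℝ) (hs : 0 ≤ s) :
    Qker γ s t = (γ / Real.Gamma (1 - γ)) *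
      ∫ y in Set.Ioi (0 : ℝ),
        Real.exp (-(|t - s| * y)) * (1 - Real.exp (-(min s t * y))) *
          y ^ (-(1 + γ)) := by
  have hsum : |t - s| + min s t = max s t := by rw [← max_sub_min_eq_abs]; ring
  have hsplit : ∀ y : ℝ, exp (-(|t - s| * y)) * (1 - exp (-(min s t * y))) * y ^ (-(1 + γ)) =
      (1 - exp (-(max s t * y))) * y ^ (-(1 + γ)) -
        (1 - exp (-(|t - s| * y))) * y ^ (-(1 + γ)) := fun y => by
    rw [← hsum, add_mul, neg_add (|t - s| * y), exp_add]
    ring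
  have hmax : 0 ≤ max s t := le_max_of_le_left hs
  simp_rw [hsplit]
  rw [integral_sub (integrableOn_one_sub_exp_neg_mul_mul_rpow hγ0 hγ1 hmax)
      (integrableOn_one_sub_exp_neg_mul_mul_rpow hγ0 hγ1 (abs_nonneg _)), mul_sub,
    div_Gamma_mul_integral_one_sub_exp_neg_mul_mul_rpow hγ0 hγ1 hmax,
    div_Gamma_mul_integral_one_sub_exp_neg_mul_mul_rpow hγ0 hγ1 (abs_nonneg _), Qker]

/-- For `0 < γ < 1` and `s,t ≥ 0`,
`Q_γ(s,t) = c_γ ∫₀^∞ e^{−|t−s|y}(1 − e^{−min(s,t) y}) y^{−(1+γ)} dy`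
with `c_γ = γ / Γ(1−γ)`. -/
theorem Qker_integral_repr (γ : ℝ) (hγ0 : 0 < γ) (hγ1 : γ < 1)
    (s t : ℝ) (hs : 0 ≤ s) (ht : 0 ≤ t) :
    Qker γ s t = (γ / Real.Gamma (1 - γ)) *
      ∫ y in Set.Ioi (0 : ℝ),
        Real.exp (-(|t - s| * y)) * (1 - Real.exp (-(min s t * y))) *
          y ^ (-(1 + γ)) :=
  Qker_integral_repr_general γ hγ0 hγ1 s t hs
end
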